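/- arXiv:1302.7099 — 3 statements merged into one kernel-verified Lean document; each statement's English description precedes it below -/
import Mathlib

section
/- Assume the standing assumptions. If (p₁ − p₀)/√p₀ · n²/N → ∞ as N → ∞, then the total degree test is asymptotically powerful: there exists a sequence of thresholds t_N ∈ ℝ such that the tests T_N = 1{W ≥ t_N}, where W := Σ_{1≤i<j≤N} W_{ij} is the total number of edges, satisfy γ_N(T_N) → 0. -/
open MeasureTheory ProbabilityTheory Filter Real Topology Asymptotics

noncomputable section

/-- The set of ordered pairs `(i,j)` with `i < j` in `Fin N`: the potential edges. -/
abbrev EdgePairs (N : ℕ) := {ij : Fin N × Fin N // ij.1 < ij.2}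

/-- The sample space: an assignment of presence/absence to each potential edge. -/
abbrev GraphSpace (N : ℕ) := EdgePairs N → Bool

/-- Bernoulli measure on `Bool` with parameter `p` (clamped to `[0,1]`). -/
noncomputable def bern (p : ℝ) : Measure Bool :=
  (PMF.bernoulli (min (Real.toNNReal p) 1) (min_le_right _ _)).toMeasure

/-- The random graph measure in which each potential edge `(i,j)`, `i<j`, is present
independently with probability `q i j`. -/
noncomputable def graphMeasure (N : ℕ) (q : Fin N → Fin N → ℝ) : Measure (GraphSpace N) :=
  Measure.pi fun ij => bern (q ij.val.1 ij.val.2)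

/-- The Erdős–Rényi null measure `G(N, p₀)`. -/
noncomputable def nullMeasure (N : ℕ) (p0 : ℝ) : Measure (GraphSpace N) :=
  graphMeasure N fun _ _ => p0

/-- The alternative measure: edges inside `S` appear with probability `pin`,
all other edges with probability `pout`. -/
noncomputable def altMeasure (N : ℕ) (S : Finset (Fin N)) (pout pin : ℝ) :
    Measure (GraphSpace N) :=
  graphMeasure N fun i j => if i ∈ S ∧ j ∈ S then pin else pout

/-- `WS S ω`: number of present edges with both endpoints in `S`. -/
def WS {N : ℕ} (S : Finset (Fin N)) (ω : GraphSpace N) : ℕ :=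
  ∑ ij : EdgePairs N,
    if ij.val.1 ∈ S ∧ ij.val.2 ∈ S ∧ ω ij = true then 1 else 0

/-- Total number of edges. -/
def totalEdges {N : ℕ} (ω : GraphSpace N) : ℕ := WS Finset.univ ω

/-- Indicator (0/1) of the edge between `i` and `j`. -/
def edgeVal {N : ℕ} (ω : GraphSpace N) (i j : Fin N) : ℕ :=
  if h : i < j then (if ω ⟨(i, j), h⟩ then 1 else 0)
  else if h' : j < i then (if ω ⟨(j, i), h'⟩ then 1 else 0)
  else 0

/-- Degree of node `i`. -/
def degree {N : ℕ} (i : Fin N) (ω : GraphSpace N) : ℕ := ∑ j, edgeVal ω i j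

/-- The risk of a test `T` (rejecting when `T ω` holds): type I error under the null
with connection probability `pnull`, plus the worst type II error over communities `S`
of size `nn`, where under the alternative edges inside `S` have probability `pin` and
all other edges probability `pout`. -/
noncomputable def grisk (N nn : ℕ) (pnull pout pin : ℝ) (T : GraphSpace N → Prop) : ℝ :=
  (nullMeasure N pnull {ω | T ω}).toReal +
    ⨆ S : {S : Finset (Fin N) // S.card = nn},
      (altMeasure N S.val pout pin {ω | ¬ T ω}).toReal

/-- Relative entropy (Kullback–Leibler divergence) of `Bern(q)` from `Bern(p)`. -/
noncomputable def H (p q : ℝ) : ℝ :=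
  q * Real.log (q / p) + (1 - q) * Real.log ((1 - q) / (1 - p))

/-! Under `P₀` the edge count `W` has mean `C(N,2) p₀`; under every `P_S` with `|S| = n` its mean
is larger by `δ = C(n,2) (p₁ - p₀)`. In both cases `W` is a sum of independent indicators, so its
variance is at most its mean. Thresholding halfway between the two means, Chebyshev's inequality
bounds the risk by `8 C(N,2) p₀ / δ² + 4 / δ`, which is `O(1 / signal² + 1 / (n² p₁))`: for the
second term, `1 / (n² (p₁ - p₀))` is controlled by `1 / signal²` when `p₁ - p₀ ≤ p₀` and by
`1 / (n² p₁)` otherwise. -/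

instance (p : ℝ) : IsProbabilityMeasure (bern p) := by
  unfold bern; infer_instance

instance (N : ℕ) (q : Fin N → Fin N → ℝ) : IsProbabilityMeasure (graphMeasure N q) := by
  unfold graphMeasure; infer_instance

instance (N : ℕ) (p : ℝ) : IsProbabilityMeasure (nullMeasure N p) := by
  unfold nullMeasure; infer_instance

instance (N : ℕ) (S : Finset (Fin N)) (p0 p1 : ℝ) :
    IsProbabilityMeasure (altMeasure N S p0 p1) := by
  unfold altMeasure; infer_instance

lemma integral_bern_ite {p : ℝ} (h0 : 0 ≤ p) (h1 : p ≤ 1) :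
    ∫ b, (if b then (1 : ℝ) else 0) ∂bern p = p := by
  have : min p.toNNReal 1 = p.toNNReal := min_eq_left (Real.toNNReal_le_one.2 h1)
  simp only [bern, this, PMF.integral_eq_sum, Fintype.univ_bool, smul_eq_mul, mul_ite, mul_one,
    mul_zero, Finset.sum_ite_eq', Finset.mem_insert, Finset.mem_singleton, Bool.true_eq_false,
    or_false, ↓reduceIte]
  exact Real.coe_toNNReal p h0

lemma variance_bern_ite_le {p : ℝ} (h0 : 0 ≤ p) (h1 : p ≤ 1) :
    Var[fun b => if b then (1 : ℝ) else 0; bern p] ≤ p := by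
  have hsq : (fun b : Bool => if b then (1 : ℝ) else 0) ^ 2 = fun b => if b then 1 else 0 := by
    ext b; cases b <;> simp
  calc _ ≤ ∫ b, ((fun b : Bool => if b then (1 : ℝ) else 0) ^ 2) b ∂bern p :=
        variance_le_expectation_sq .of_discrete
    _ = p := by rw [hsq, integral_bern_ite h0 h1]

lemma measureReal_abs_sum_sub_ge_le {ι : Type*} [Fintype ι] {q : ι → ℝ}
    (hq : ∀ i, 0 ≤ q i ∧ q i ≤ 1) {c : ℝ} (hc : 0 < c) :
    (Measure.pi fun i => bern (q i)).real
        {ω | c ≤ |∑ i, (if ω i then (1 : ℝ) else 0) - ∑ i, q i|} ≤ (∑ i, q i) / c ^ 2 := by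
  set X : (ι → Bool) → ℝ := ∑ i, fun ω => if ω i then (1 : ℝ) else 0 with hX
  have hXω (ω : ι → Bool) : X ω = ∑ i, if ω i then (1 : ℝ) else 0 := by simp [hX]
  have hmean : (Measure.pi fun i => bern (q i))[X] = ∑ i, q i := by
    simp_rw [hXω]
    rw [integral_finsetSum _ fun i _ => .of_finite]
    refine Finset.sum_congr rfl fun i _ => ?_
    exact (integral_comp_eval (μ := fun i => bern (q i)) (i := i)
      (f := fun b => if b then (1 : ℝ) else 0) .of_discrete).trans
        (integral_bern_ite (hq i).1 (hq i).2)
  have hvar : Var[X; Measure.pi fun i => bern (q i)] ≤ ∑ i, q i := by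
    rw [hX, variance_sum_pi (μ := fun i => bern (q i))
      (X := fun _ (b : Bool) => if b then (1 : ℝ) else 0) fun i => .of_discrete]
    exact Finset.sum_le_sum fun i _ => variance_bern_ite_le (hq i).1 (hq i).2
  have hcheb := meas_ge_le_variance_div_sq (μ := Measure.pi fun i => bern (q i)) (X := X)
    .of_discrete hc
  rw [hmean] at hcheb
  simp_rw [hXω] at hcheb
  exact ENNReal.toReal_le_of_le_ofReal
    (div_nonneg (Finset.sum_nonneg fun i _ => (hq i).1) (sq_nonneg c))
    (hcheb.trans (ENNReal.ofReal_le_ofReal (by gcongr)))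

section Graph

variable {N : ℕ}

open Finset

lemma totalEdges_cast (ω : GraphSpace N) :
    (totalEdges ω : ℝ) = ∑ e, if ω e then (1 : ℝ) else 0 := by
  simp [totalEdges, WS]

lemma card_edgePairs_within (S : Finset (Fin N)) :
    #{e : EdgePairs N | e.1.1 ∈ S ∧ e.1.2 ∈ S} = (#S).choose 2 := by
  rw [← card_product_filter_lt]
  refine card_bij (fun e _ => e.1) (fun e he => ?_) (fun e _ e' _ => Subtype.ext)
    (fun x hx => ?_)
  · simpa [mem_filter.1 he] using e.2
  · simp only [mem_filter, mem_product] at hx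
    exact ⟨⟨x, hx.2⟩, by simpa using hx.1, rfl⟩

lemma card_edgePairs : Fintype.card (EdgePairs N) = N.choose 2 := by
  simpa using card_edgePairs_within (univ : Finset (Fin N))

lemma sum_ite_mem_edgePairs (S : Finset (Fin N)) (p0 p1 : ℝ) :
    ∑ e : EdgePairs N, (if e.1.1 ∈ S ∧ e.1.2 ∈ S then p1 else p0)
      = N.choose 2 * p0 + (#S).choose 2 * (p1 - p0) := by
  have hterm (e : EdgePairs N) : (if e.1.1 ∈ S ∧ e.1.2 ∈ S then p1 else p0)
      = p0 + if e.1.1 ∈ S ∧ e.1.2 ∈ S then p1 - p0 else 0 := by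
    split_ifs <;> ring
  simp only [hterm, sum_add_distrib, sum_const, card_univ, card_edgePairs,
    ← sum_filter, card_edgePairs_within, nsmul_eq_mul]

lemma graphMeasure_real_abs_sub_ge_le {q : Fin N → Fin N → ℝ} (hq : ∀ i j, 0 ≤ q i j ∧ q i j ≤ 1)
    {c : ℝ} (hc : 0 < c) :
    (graphMeasure N q).real {ω | c ≤ |(totalEdges ω : ℝ) - ∑ e : EdgePairs N, q e.1.1 e.1.2|}
      ≤ (∑ e : EdgePairs N, q e.1.1 e.1.2) / c ^ 2 := by
  simp_rw [totalEdges_cast]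
  exact measureReal_abs_sum_sub_ge_le (fun e => hq _ _) hc

lemma nullMeasure_real_totalEdges_ge_le {p c : ℝ} (h0 : 0 ≤ p) (h1 : p ≤ 1) (hc : 0 < c) :
    (nullMeasure N p).real {ω | N.choose 2 * p + c ≤ (totalEdges ω : ℝ)}
      ≤ N.choose 2 * p / c ^ 2 := by
  have hcheb := graphMeasure_real_abs_sub_ge_le (N := N) (q := fun _ _ => p)
    (fun _ _ => ⟨h0, h1⟩) hc
  simp only [sum_const, card_univ, card_edgePairs, nsmul_eq_mul] at hcheb
  refine (measureReal_mono fun ω hω => ?_).trans hcheb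
  simp only [Set.mem_ofPred_eq] at hω ⊢
  exact (le_sub_iff_add_le'.2 hω).trans (le_abs_self _)

lemma altMeasure_real_totalEdges_lt_le (S : Finset (Fin N)) {p0 p1 c : ℝ} (h0 : 0 ≤ p0)
    (h01 : p0 ≤ p1) (h1 : p1 ≤ 1) (hc : 0 < c) :
    (altMeasure N S p0 p1).real
        {ω | (totalEdges ω : ℝ) < N.choose 2 * p0 + (#S).choose 2 * (p1 - p0) - c}
      ≤ (N.choose 2 * p0 + (#S).choose 2 * (p1 - p0)) / c ^ 2 := by
  have hcheb := graphMeasure_real_abs_sub_ge_le (N := N)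
    (q := fun i j => if i ∈ S ∧ j ∈ S then p1 else p0)
    (fun i j => by split_ifs <;> constructor <;> linarith) hc
  rw [sum_ite_mem_edgePairs] at hcheb
  refine (measureReal_mono fun ω hω => ?_).trans hcheb
  simp only [Set.mem_ofPred_eq] at hω ⊢
  rw [abs_sub_comm]
  exact (le_sub_comm.1 hω.le).trans (le_abs_self _)

lemma grisk_totalEdges_le {nn : ℕ} {p0 p1 : ℝ} (h0 : 0 ≤ p0) (h01 : p0 < p1) (h1 : p1 ≤ 1)
    (hnn : 2 ≤ nn) :
    grisk N nn p0 p0 p1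
        (fun ω => N.choose 2 * p0 + nn.choose 2 * (p1 - p0) / 2 ≤ (totalEdges ω : ℝ))
      ≤ 8 * (N.choose 2 * p0) / (nn.choose 2 * (p1 - p0)) ^ 2
        + 4 / (nn.choose 2 * (p1 - p0)) := by
  set δ : ℝ := nn.choose 2 * (p1 - p0)
  have hδ : 0 < δ := mul_pos (by exact_mod_cast Nat.choose_pos hnn) (sub_pos.2 h01)
  have htype1 := nullMeasure_real_totalEdges_ge_le (N := N) h0 (h01.le.trans h1) (half_pos hδ)
  have htype2 (S : {S : Finset (Fin N) // #S = nn}) :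
      (altMeasure N S p0 p1).real {ω | ¬ N.choose 2 * p0 + δ / 2 ≤ (totalEdges ω : ℝ)}
        ≤ (N.choose 2 * p0 + δ) / (δ / 2) ^ 2 := by
    have h := altMeasure_real_totalEdges_lt_le S.1 h0 h01.le h1 (half_pos hδ)
    rw [S.2] at h
    refine (measureReal_mono fun ω hω => ?_).trans h
    simp only [Set.mem_ofPred_eq, not_le] at hω ⊢
    linarith
  calc _ ≤ N.choose 2 * p0 / (δ / 2) ^ 2 + (N.choose 2 * p0 + δ) / (δ / 2) ^ 2 :=
        add_le_add htype1 (Real.iSup_le htype2 (by positivity))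
    _ = _ := by field_simp; ring

end Graph

lemma cast_choose_two_le_sq_div_two (N : ℕ) : (N.choose 2 : ℝ) ≤ N ^ 2 / 2 := by
  rw [Nat.cast_choose_two]
  nlinarith [N.cast_nonneg (α := ℝ)]

lemma sq_div_four_le_cast_choose_two {n : ℕ} (hn : 2 ≤ n) : (n : ℝ) ^ 2 / 4 ≤ n.choose 2 := by
  have hn' : (2 : ℝ) ≤ n := by exact_mod_cast hn
  rw [Nat.cast_choose_two]
  nlinarith

lemma inv_sq_mul_sub_le {n N p0 p1 : ℝ} (hn : 0 < n) (hnN : n ≤ N) (hp0 : 0 < p0)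
    (hp01 : p0 < p1) :
    (n ^ 2 * (p1 - p0))⁻¹ ≤ N ^ 2 * p0 / (n ^ 4 * (p1 - p0) ^ 2) + 2 * (n ^ 2 * p1)⁻¹ := by
  have hd : 0 < p1 - p0 := sub_pos.2 hp01
  have hp1 : 0 < p1 := hp0.trans hp01
  rcases le_or_gt (p1 - p0) p0 with hsmall | hlarge
  · have hnN2 : n ^ 2 ≤ N ^ 2 := pow_le_pow_left₀ hn.le hnN 2
    calc (n ^ 2 * (p1 - p0))⁻¹ ≤ n ^ 2 * p0 / (n ^ 4 * (p1 - p0) ^ 2) := by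
          rw [inv_eq_one_div, div_le_div_iff₀ (by positivity) (by positivity)]
          nlinarith [mul_le_mul_of_nonneg_left hsmall (by positivity : (0 : ℝ) ≤ n ^ 4 * (p1 - p0))]
      _ ≤ N ^ 2 * p0 / (n ^ 4 * (p1 - p0) ^ 2) := by gcongr
      _ ≤ _ := le_add_of_nonneg_right (by positivity)
  · calc (n ^ 2 * (p1 - p0))⁻¹ ≤ 2 * (n ^ 2 * p1)⁻¹ := by
          rw [← div_eq_mul_inv, inv_eq_one_div, div_le_div_iff₀ (by positivity) (by positivity)]
          nlinarith [mul_pos (pow_pos hn 2) hd]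
      _ ≤ _ := le_add_of_nonneg_left (by positivity)

lemma grisk_totalEdges_le_signal {N n : ℕ} {p0 p1 : ℝ} (h0 : 0 < p0) (h01 : p0 < p1)
    (h1 : p1 ≤ 1) (hn : 2 ≤ n) (hnN : n ≤ N) :
    grisk N n p0 p0 p1
        (fun ω => N.choose 2 * p0 + n.choose 2 * (p1 - p0) / 2 ≤ (totalEdges ω : ℝ))
      ≤ 80 * (((p1 - p0) / √p0 * (n ^ 2 / N)) ^ 2)⁻¹ + 32 * (n ^ 2 * p1)⁻¹ := by
  have hn0 : (0 : ℝ) < n := by positivity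
  have hN0 : (0 : ℝ) < N := Nat.cast_pos.2 (by omega)
  have hd : 0 < p1 - p0 := sub_pos.2 h01
  have hsignal : (((p1 - p0) / √p0 * (n ^ 2 / N)) ^ 2)⁻¹
      = N ^ 2 * p0 / (n ^ 4 * (p1 - p0) ^ 2) := by
    rw [mul_pow, div_pow, div_pow, sq_sqrt h0.le]
    field_simp
  calc _ ≤ 8 * (N.choose 2 * p0) / (n.choose 2 * (p1 - p0)) ^ 2
        + 4 / (n.choose 2 * (p1 - p0)) := grisk_totalEdges_le h0.le h01 h1 hn
    _ ≤ 8 * (N ^ 2 / 2 * p0) / (n ^ 2 / 4 * (p1 - p0)) ^ 2 + 4 / (n ^ 2 / 4 * (p1 - p0)) := by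
        gcongr
        · exact cast_choose_two_le_sq_div_two N
        · exact sq_div_four_le_cast_choose_two hn
        · exact sq_div_four_le_cast_choose_two hn
    _ = 64 * (N ^ 2 * p0 / (n ^ 4 * (p1 - p0) ^ 2)) + 16 * (n ^ 2 * (p1 - p0))⁻¹ := by
        field_simp
        ring
    _ ≤ _ := by
        rw [hsignal]
        nlinarith [inv_sq_mul_sub_le hn0 (Nat.cast_le.2 hnN) h0 h01]

theorem total_degree_test_powerful_general
    (n : ℕ → ℕ) (p0 p1 : ℕ → ℝ)
    (hn : ∀ N, 1 ≤ n N ∧ n N ≤ N)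
    (hp : ∀ N, 0 < p0 N ∧ p0 N < p1 N ∧ p1 N < 1)
    (hninf : Tendsto n atTop atTop)
    (hn2p1 : Tendsto (fun N : ℕ => (n N : ℝ) ^ 2 * p1 N) atTop atTop)
    (hsignal : Tendsto
      (fun N : ℕ => (p1 N - p0 N) / Real.sqrt (p0 N) * ((n N : ℝ) ^ 2 / N)) atTop atTop) :
    ∃ t : ℕ → ℝ,
      Tendsto (fun N : ℕ => grisk N (n N) (p0 N) (p0 N) (p1 N)
        (fun ω => t N ≤ (totalEdges ω : ℝ))) atTop (𝓝 0) := by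
  refine ⟨fun N => N.choose 2 * p0 N + (n N).choose 2 * (p1 N - p0 N) / 2, ?_⟩
  have hbound : Tendsto (fun N => 80 * (((p1 N - p0 N) / √(p0 N) * ((n N : ℝ) ^ 2 / N)) ^ 2)⁻¹
      + 32 * ((n N : ℝ) ^ 2 * p1 N)⁻¹) atTop (𝓝 0) := by
    simpa using (((tendsto_pow_atTop two_ne_zero).comp hsignal).inv_tendsto_atTop.const_mul 80).add
      (hn2p1.inv_tendsto_atTop.const_mul 32)
  refine squeeze_zero' (.of_forall fun N => ?_) ?_ hbound
  · exact add_nonneg ENNReal.toReal_nonneg (Real.iSup_nonneg fun _ => ENNReal.toReal_nonneg)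
  · filter_upwards [hninf.eventually_ge_atTop 2] with N hN
    exact grisk_totalEdges_le_signal (hp N).1 (hp N).2.1 (hp N).2.2.le hN (hn N).2

/-- if `(p₁ − p₀)/√p₀ · n²/N → ∞`, the total degree test is asymptotically
powerful: for suitable thresholds `t_N`, the tests `1{W ≥ t_N}` have risk tending to 0. -/
theorem total_degree_test_powerful
    (n : ℕ → ℕ) (p0 p1 : ℕ → ℝ)
    (hn : ∀ N, 1 ≤ n N ∧ n N ≤ N)
    (hp : ∀ N, 0 < p0 N ∧ p0 N < p1 N ∧ p1 N < 1)
    (hp0away : ∃ c < (1 : ℝ), ∀ N, p0 N ≤ c)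
    (hratio : Tendsto (fun N : ℕ => (n N : ℝ) / N) atTop (𝓝 0))
    (hN2p0 : Tendsto (fun N : ℕ => (N : ℝ) ^ 2 * p0 N) atTop atTop)
    (hninf : Tendsto n atTop atTop)
    (hn2p1 : Tendsto (fun N : ℕ => (n N : ℝ) ^ 2 * p1 N) atTop atTop)
    (hsignal : Tendsto
      (fun N : ℕ => (p1 N - p0 N) / Real.sqrt (p0 N) * ((n N : ℝ) ^ 2 / N)) atTop atTop) :
    ∃ t : ℕ → ℝ,
      Tendsto (fun N : ℕ => grisk N (n N) (p0 N) (p0 N) (p1 N)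
        (fun ω => t N ≤ (totalEdges ω : ℝ))) atTop (𝓝 0) :=
  total_degree_test_powerful_general n p0 p1 hn hp hninf hn2p1 hsignal
end
end

section
/- Let 0 < p' ≤ p₁ < 1 and t ∈ [0,1], and set p := p' + t(p₁ − p'). Then H_{p'}(p₁) − H_p(p₁) ≤ t · (p₁ − p')² / (p'(1 − p')). -/
/-!
Changing the reference parameter from `a` to `b` changes `H · q` by
`q log (b/a) + (1 - q) log ((1 - b)/(1 - a))`. Bounding both logarithms by `log x ≤ x - 1`
gives `(b - a)(q - a) / (a(1 - a))`, which for `b = a + t(q - a)` is `t (q - a)² / (a(1 - a))`.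
-/

open Real

noncomputable section

lemma H_sub_H_eq {a b q : ℝ} (ha : a ≠ 0) (ha1 : 1 - a ≠ 0) (hb : b ≠ 0) (hb1 : 1 - b ≠ 0)
    (hq : q ≠ 0) (hq1 : 1 - q ≠ 0) :
    H a q - H b q = q * log (b / a) + (1 - q) * log ((1 - b) / (1 - a)) := by
  unfold H
  rw [log_div hq ha, log_div hq hb, log_div hq1 ha1, log_div hq1 hb1, log_div hb ha,
    log_div hb1 ha1]
  ring

lemma log_div_le_sub_div {x y : ℝ} (hx : 0 < x) (hy : 0 < y) : log (y / x) ≤ (y - x) / x := by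
  calc log (y / x) ≤ y / x - 1 := log_le_sub_one_of_pos (div_pos hy hx)
    _ = (y - x) / x := by field_simp

lemma H_sub_H_le {a b q : ℝ} (ha : 0 < a) (ha1 : a < 1) (hb : 0 < b) (hb1 : b < 1)
    (hq : 0 < q) (hq1 : q < 1) :
    H a q - H b q ≤ (b - a) * (q - a) / (a * (1 - a)) := by
  have ha1' : 0 < 1 - a := sub_pos.mpr ha1
  have hb1' : 0 < 1 - b := sub_pos.mpr hb1
  have hq1' : 0 < 1 - q := sub_pos.mpr hq1
  rw [H_sub_H_eq ha.ne' ha1'.ne' hb.ne' hb1'.ne' hq.ne' hq1'.ne']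
  calc q * log (b / a) + (1 - q) * log ((1 - b) / (1 - a))
      ≤ q * ((b - a) / a) + (1 - q) * (((1 - b) - (1 - a)) / (1 - a)) := by
        gcongr
        · exact log_div_le_sub_div ha hb
        · exact log_div_le_sub_div ha1' hb1'
    _ = (b - a) * (q - a) / (a * (1 - a)) := by
        field_simp
        ring

/-- for `0 < p' ≤ p₁ < 1`, `t ∈ [0,1]` and `p = p' + t(p₁ − p')`,
`H_{p'}(p₁) − H_p(p₁) ≤ t (p₁ − p')² / (p'(1 − p'))`. -/
theorem entropy_shift_bound (p' p1 t p : ℝ)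
    (hp' : 0 < p') (hp'p1 : p' ≤ p1) (hp1 : p1 < 1)
    (ht : t ∈ Set.Icc (0 : ℝ) 1)
    (hpdef : p = p' + t * (p1 - p')) :
    H p' p1 - H p p1 ≤ t * (p1 - p') ^ 2 / (p' * (1 - p')) := by
  obtain ⟨ht0, ht1⟩ := ht
  have hp'p : p' ≤ p := by nlinarith
  have hpp1 : p ≤ p1 := by nlinarith
  calc H p' p1 - H p p1 ≤ (p - p') * (p1 - p') / (p' * (1 - p')) :=
        H_sub_H_le hp' (by linarith) (by linarith) (by linarith) (by linarith) hp1
    _ = t * (p1 - p') ^ 2 / (p' * (1 - p')) := by rw [hpdef]; ring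
end
end

section
/- (Null tail bound for the scan statistic.) Let N ≥ n ≥ 1 be integers, p₀ ∈ (0,1), and let W = (W_{ij}) be a symmetric {0,1}-valued N×N random matrix with zero diagonal whose upper-diagonal entries W_{ij} (i<j) are i.i.d. Bernoulli(p₀). Then for every a with p₀ ≤ a < 1, P( max_{|S|=n} W_S ≥ a · n(n−1)/2 ) ≤ exp( n log(N e / n) − (n(n−1)/2) · H_{p₀}(a) ), where W_S := Σ_{i<j, i,j∈S} W_{ij} and the maximum is over subsets S ⊆ {1,…,N} of size n. -/
open MeasureTheory ProbabilityTheory Filter Real Topology Asymptotics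

noncomputable section

/-! A union bound over the `N.choose n ≤ (N e / n)^n` communities of size `n`. Each community
carries `K = n(n-1)/2` independent `Bernoulli(p₀)` edges, so its edge count exceeds `a K` with
probability at most `exp (-K H_{p₀}(a))` by the Chernoff bound. -/

open Finset

instance inst_s19 (p : ℝ) : IsProbabilityMeasure (bern p) := by
  unfold bern; infer_instance

lemma integral_bern {p : ℝ} (hp0 : 0 ≤ p) (hp1 : p ≤ 1) (f : Bool → ℝ) :
    ∫ b, f b ∂bern p = p * f true + (1 - p) * f false := by
  rw [bern, PMF.integral_eq_sum, Fintype.sum_bool]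
  simp [PMF.bernoulli_apply, hp0, hp1]

/-- The optimal Chernoff exponent at `e^t = a (1-p) / ((1-a) p)`. -/
lemma H_eq_mul_log_sub_log {p a : ℝ} (hp0 : 0 < p) (hp1 : p < 1) (ha0 : 0 < a) (ha1 : a < 1) :
    H p a = a * log (a * (1 - p) / ((1 - a) * p)) - log ((1 - p) / (1 - a)) := by
  have h1a : 0 < 1 - a := by linarith
  have h1p : 0 < 1 - p := by linarith
  rw [H, log_div (by positivity) (by positivity), log_div (by positivity) (by positivity),
    log_div (by positivity) (by positivity), log_div (by positivity) (by positivity),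
    log_mul (by positivity) (by positivity), log_mul (by positivity) (by positivity)]
  ring

section BernoulliProduct

variable {ι : Type*} [Fintype ι] [DecidableEq ι]

lemma integral_exp_mul_card_filter_pi_bern {p : ℝ} (hp0 : 0 ≤ p) (hp1 : p ≤ 1) (E : Finset ι)
    (t : ℝ) :
    ∫ ω, exp (t * #{i ∈ E | ω i}) ∂Measure.pi (fun _ : ι => bern p) =
      (p * exp t + (1 - p)) ^ #E := by
  have hprod : ∀ ω : ι → Bool, exp (t * #{i ∈ E | ω i}) =
      ∏ i, (if i ∈ E then (if ω i then exp t else 1) else 1) := by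
    intro ω
    rw [Fintype.prod_ite_mem, card_filter, Nat.cast_sum, mul_sum, exp_sum]
    refine prod_congr rfl fun i _ => ?_
    split_ifs <;> simp
  simp_rw [hprod]
  calc _ = ∏ i, ∫ b, (if i ∈ E then (if b then exp t else 1) else 1) ∂bern p :=
        integral_fintype_prod_eq_prod _
    _ = ∏ i, if i ∈ E then p * exp t + (1 - p) else 1 := by
        refine prod_congr rfl fun i _ => ?_
        split_ifs <;> simp [integral_bern hp0 hp1]
    _ = _ := by rw [Fintype.prod_ite_mem, prod_const]

lemma pi_bern_chernoff_bound {p a : ℝ} (hp : 0 < p) (hpa : p ≤ a) (ha : a < 1) (E : Finset ι) :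
    (Measure.pi fun _ : ι => bern p).real {ω | a * #E ≤ #{i ∈ E | ω i}} ≤
      exp (-(#E * H p a)) := by
  have ha0 : 0 < a := hp.trans_le hpa
  have h1a : 0 < 1 - a := by linarith
  have h1p : 0 < 1 - p := by linarith
  set t := log (a * (1 - p) / ((1 - a) * p))
  have hexp_t : exp t = a * (1 - p) / ((1 - a) * p) := exp_log (by positivity)
  have ht : 0 ≤ t := log_nonneg (by rw [le_div_iff₀ (by positivity)]; nlinarith)
  have hmgf : mgf (fun ω : ι → Bool => (#{i ∈ E | ω i} : ℝ)) (Measure.pi fun _ => bern p) t =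
      ((1 - p) / (1 - a)) ^ #E := by
    rw [mgf, integral_exp_mul_card_filter_pi_bern hp.le (by linarith), hexp_t]
    congr 1
    field_simp
    ring
  calc _ ≤ exp (-t * (a * #E)) * ((1 - p) / (1 - a)) ^ #E := by
        rw [← hmgf]; exact measure_ge_le_exp_mul_mgf _ ht .of_finite
    _ = exp (-(#E * H p a)) := by
        rw [← exp_log (show 0 < (1 - p) / (1 - a) by positivity), ← exp_nat_mul, ← exp_add,
          H_eq_mul_log_sub_log hp (by linarith) ha0 ha]
        congr 1
        ring

end BernoulliProduct

section Communities

variable {N : ℕ}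

def edgesWithin (S : Finset (Fin N)) : Finset (EdgePairs N) :=
  (S ×ˢ S).subtype fun ij => ij.1 < ij.2

lemma card_edgesWithin (S : Finset (Fin N)) : #(edgesWithin S) = (#S).choose 2 := by
  rw [edgesWithin, card_subtype, card_product_filter_lt]

lemma WS_eq_card_filter (S : Finset (Fin N)) (ω : GraphSpace N) :
    WS S ω = #{ij ∈ edgesWithin S | ω ij} := by
  rw [WS, ← card_filter]
  congr 1
  ext ij
  simp [edgesWithin, and_assoc]

lemma nullMeasure_real_WS_ge_le {p a : ℝ} (hp : 0 < p) (hpa : p ≤ a) (ha : a < 1)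
    (S : Finset (Fin N)) :
    (nullMeasure N p).real {ω | a * ((#S : ℝ) * ((#S : ℝ) - 1) / 2) ≤ WS S ω} ≤
      exp (-((#S : ℝ) * ((#S : ℝ) - 1) / 2 * H p a)) := by
  simpa [nullMeasure, graphMeasure, WS_eq_card_filter, card_edgesWithin, Nat.cast_choose_two] using
    pi_bern_chernoff_bound hp hpa ha (edgesWithin S)

end Communities

lemma Nat.choose_le_mul_exp_one_div_pow (N n : ℕ) : (N.choose n : ℝ) ≤ (N * exp 1 / n) ^ n := by
  have hfact : (n : ℝ) ^ n ≤ exp 1 ^ n * n.factorial := by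
    rw [← exp_nat_mul, mul_one, ← div_le_iff₀ (by positivity)]
    exact pow_div_factorial_le_exp _ n.cast_nonneg n
  calc (N.choose n : ℝ) ≤ N ^ n / n.factorial := Nat.choose_le_pow_div n N
    _ ≤ (N * exp 1 / n) ^ n := by
        rw [div_pow, mul_pow, div_le_div_iff₀ (by positivity) (mod_cast Nat.pow_self_pos),
          mul_assoc]
        gcongr

/-- null tail bound for the scan statistic: under `G(N, p₀)`, for any
`a ∈ [p₀, 1)`,
`P(max_{|S|=n} W_S ≥ a n(n−1)/2) ≤ exp(n log(Ne/n) − (n(n−1)/2) H_{p₀}(a))`. -/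
theorem scan_statistic_null_tail_bound
    (N n : ℕ) (hn : 1 ≤ n) (hnN : n ≤ N) (p0 a : ℝ)
    (hp0 : p0 ∈ Set.Ioo (0 : ℝ) 1) (ha : p0 ≤ a) (ha1 : a < 1) :
    (nullMeasure N p0 {ω | ∃ S : Finset (Fin N), S.card = n ∧
        a * ((n : ℝ) * ((n : ℝ) - 1) / 2) ≤ (WS S ω : ℝ)}).toReal ≤
      Real.exp ((n : ℝ) * Real.log ((N : ℝ) * Real.exp 1 / n) -
        ((n : ℝ) * ((n : ℝ) - 1) / 2) * H p0 a) := by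
  set m : ℝ := n * (n - 1) / 2
  have hbase : 0 < (N : ℝ) * exp 1 / n := by
    have hn' : (0 : ℝ) < n := by exact_mod_cast hn
    have hN' : (0 : ℝ) < N := by exact_mod_cast hn.trans hnN
    positivity
  have hunion : {ω | ∃ S : Finset (Fin N), #S = n ∧ a * m ≤ WS S ω} =
      ⋃ S ∈ powersetCard n univ, {ω | a * m ≤ WS S ω} := by
    ext; simp
  calc (nullMeasure N p0 _).toReal
      ≤ ∑ S ∈ powersetCard n univ, (nullMeasure N p0).real {ω | a * m ≤ WS S ω} := by
        rw [← measureReal_def, hunion]; exact measureReal_biUnion_finset_le _ _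
    _ ≤ ∑ S ∈ powersetCard n (univ : Finset (Fin N)), exp (-(m * H p0 a)) := by
        refine sum_le_sum fun S hS => ?_
        have hS_bound := nullMeasure_real_WS_ge_le hp0.1 ha ha1 S
        rwa [mem_powersetCard_univ.1 hS] at hS_bound
    _ = N.choose n * exp (-(m * H p0 a)) := by simp
    _ ≤ (N * exp 1 / n) ^ n * exp (-(m * H p0 a)) := by
        gcongr; exact Nat.choose_le_mul_exp_one_div_pow N n
    _ = exp (n * log (N * exp 1 / n) - m * H p0 a) := by
        rw [sub_eq_add_neg, exp_add, exp_nat_mul, exp_log hbase]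
end
end
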